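/- arXiv:1609.09856 — 2 statements merged into one kernel-verified Lean document; each statement's English description precedes it below -/
import Mathlib

section
/- Let (𝔄, H, (ι_j)_{j∈ℤ}, Ω) be an exchangeable stochastic process. Then the following are equivalent: (a) [block singleton condition] ⟨XYZΩ, Ω⟩ = ⟨XZΩ, Ω⟩·⟨YΩ, Ω⟩ whenever I₁, I₂, I₃ ⊆ ℤ are finite with (I₁ ∪ I₃) ∩ I₂ = ∅, X ∈ 𝔄_{I₁}, Y ∈ 𝔄_{I₂} and Z ∈ 𝔄_{I₃}; (b) [convergence to equilibrium] for all finite I₁, I₃ ⊆ ℤ, X ∈ 𝔄_{I₁}, Z ∈ 𝔄_{I₃}, every m ≥ 1, k₁,…,k_m ∈ ℤ and B₁,…,B_m ∈ 𝔄, the averages (1/|P_I|) Σ_{g ∈ P_I} ⟨X · ι_{g(k₁)}(B₁)⋯ι_{g(k_m)}(B_m) · Z Ω, Ω⟩ converge, along the net of finite subsets I ⊆ ℤ directed by inclusion, to ⟨XZΩ, Ω⟩·⟨ι_{k₁}(B₁)⋯ι_{k_m}(B_m)Ω, Ω⟩. -/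
open Filter

variable {A H : Type*} [NormedRing A] [StarRing A] [CStarRing A]
  [NormedAlgebra ℂ A] [StarModule ℂ A] [CompleteSpace A]
  [NormedAddCommGroup H] [InnerProductSpace ℂ H] [CompleteSpace H]

/-- The *-subalgebra `𝔄_I` of `B(H)` generated by `⋃_{j ∈ I} ι_j(𝔄)`. -/
noncomputable def localAlgebra (ι : ℤ → A →⋆ₐ[ℂ] (H →L[ℂ] H)) (I : Finset ℤ) :
    StarSubalgebra ℂ (H →L[ℂ] H) :=
  StarAlgebra.adjoin ℂ (⋃ j ∈ I, Set.range fun a : A => ι j a)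

/-- The permutation of `ℤ` obtained by extending a permutation of the finite set `I`
by the identity outside `I`; as `g` ranges over `Equiv.Perm I` these are exactly the
elements of the group `P_I` of permutations of `ℤ` fixing `ℤ ∖ I` pointwise. -/
def extendPerm (I : Finset ℤ) (g : Equiv.Perm {x : ℤ // x ∈ I}) : Equiv.Perm ℤ :=
  g.extendDomain (Equiv.refl _)

/-!
By linearity in `X` and `Z`, exchangeability upgrades to `⟪Ω, X W_{σ ∘ k} Z Ω⟫ = ⟪Ω, X W_k Z Ω⟫` for
every finitary permutation `σ` fixing the supports of `X` and `Z`, where `W_k = ι_{k₁}(B₁)⋯`.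
For a finite `I` containing the `kᵢ`, a uniformly random `g ∈ P_I` sends some `kᵢ` into a fixed
finite set `F` with probability at most `m |F| / |I|`; hence the average over `P_I` of a bounded
function of `g` that equals `L` whenever `g` moves every `kᵢ` off `F` tends to `L`.
Take `F` to be the union of the supports of `X` and `Z`. Under the block singleton condition such
a term equals `⟪Ω, X Z Ω⟫ ⟪Ω, W_k Ω⟫`. Conversely, when the `kᵢ` avoid `F` such a term equals
`⟪Ω, X W_k Z Ω⟫`, so uniqueness of limits gives the factorisation for monomials `Y = W_k`, and
linearity extends it to all of `𝔄_{I₂}`.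
-/

open Finset Equiv
open scoped InnerProductSpace Nat Topology

theorem Fin.comp_append {α β : Type*} {m n : ℕ} (f : α → β) (u : Fin m → α) (v : Fin n → α) :
    f ∘ Fin.append u v = Fin.append (f ∘ u) (f ∘ v) := by
  ext i
  induction i using Fin.addCases <;> simp

lemma norm_inner_apply_self_le {𝕜 E : Type*} [RCLike 𝕜] [NormedAddCommGroup E]
    [InnerProductSpace 𝕜 E] (T : E →L[𝕜] E) (x : E) : ‖⟪x, T x⟫_𝕜‖ ≤ ‖T‖ * ‖x‖ ^ 2 :=
  calc ‖⟪x, T x⟫_𝕜‖ ≤ ‖x‖ * ‖T x‖ := norm_inner_le_norm _ _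
    _ ≤ ‖x‖ * (‖T‖ * ‖x‖) := by gcongr; exact T.le_opNorm x
    _ = ‖T‖ * ‖x‖ ^ 2 := by ring

lemma norm_average_sub_le {𝕜 G : Type*} [RCLike 𝕜] [Fintype G] [Nonempty G] (f : G → 𝕜)
    (L : 𝕜) {C : ℝ} (s : Finset G) (hC : ∀ g, ‖f g - L‖ ≤ C) (hL : ∀ g ∉ s, f g = L) :
    ‖(Fintype.card G : 𝕜)⁻¹ * ∑ g, f g - L‖ ≤ #s * C / Fintype.card G := by
  have hG : (Fintype.card G : 𝕜) ≠ 0 := Nat.cast_ne_zero.mpr Fintype.card_ne_zero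
  have average_sub : (Fintype.card G : 𝕜)⁻¹ * ∑ g, f g - L =
      (Fintype.card G : 𝕜)⁻¹ * ∑ g ∈ s, (f g - L) := by
    rw [sum_subset (subset_univ s) fun g _ hg => by rw [hL g hg, sub_self], sum_sub_distrib,
      sum_const, card_univ, nsmul_eq_mul, mul_sub, inv_mul_cancel_left₀ hG]
  calc ‖(Fintype.card G : 𝕜)⁻¹ * ∑ g, f g - L‖
      ≤ (Fintype.card G : ℝ)⁻¹ * ∑ g ∈ s, ‖f g - L‖ := by
        rw [average_sub, norm_mul, norm_inv, RCLike.norm_natCast]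
        gcongr
        exact norm_sum_le _ _
    _ ≤ (Fintype.card G : ℝ)⁻¹ * (#s * C) := by
        gcongr
        simpa using sum_le_card_nsmul s _ C fun g _ => hC g
    _ = #s * C / Fintype.card G := by ring

section PermCounting

variable {α : Type*} [Fintype α] [DecidableEq α]

lemma card_filter_perm_apply_eq (x y : α) :
    #{g : Perm α | g x = y} = #{g : Perm α | g x = x} :=
  card_nbij' (swap x y * ·) (swap x y * ·) (fun g hg => by simp_all)
    (fun g hg => by simp_all) (fun g _ => swap_mul_self_mul x y g)
    (fun g _ => swap_mul_self_mul x y g)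

lemma card_filter_perm_apply_mem (x : α) (S : Finset α) :
    #{g : Perm α | g x ∈ S} = #S * #{g : Perm α | g x = x} := by
  rw [card_eq_sum_card_fiberwise (f := fun g => g x) (t := S) (fun g hg => by simpa using hg),
    sum_congr rfl fun y hy => ?_, sum_const, smul_eq_mul]
  rw [filter_filter, ← card_filter_perm_apply_eq x y]
  congr 1
  exact filter_congr fun g _ => ⟨And.right, fun h => ⟨h ▸ hy, h⟩⟩

lemma card_filter_perm_apply_mem_mul_card (x : α) (S : Finset α) :
    #{g : Perm α | g x ∈ S} * Fintype.card α = #S * (Fintype.card α)! := by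
  have h := card_filter_perm_apply_mem x univ
  rw [filter_true_of_mem (fun g _ => mem_univ _), card_univ, Fintype.card_perm, card_univ] at h
  rw [card_filter_perm_apply_mem, h]
  ring

end PermCounting

section FinitaryPerm

lemma extendPerm_apply_of_mem (I : Finset ℤ) (g : Perm {x : ℤ // x ∈ I}) {x : ℤ} (hx : x ∈ I) :
    extendPerm I g x = g ⟨x, hx⟩ := by
  simpa [extendPerm] using g.extendDomain_apply_subtype (Equiv.refl _) (p := (· ∈ I)) hx

lemma finite_setOf_extendPerm_ne (I : Finset ℤ) (g : Perm {x : ℤ // x ∈ I}) :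
    {x : ℤ | extendPerm I g x ≠ x}.Finite :=
  I.finite_toSet.subset fun x hx => by
    by_contra hxI
    exact hx (g.extendDomain_apply_not_subtype (Equiv.refl _) (by simpa using hxI))

theorem Set.InjOn.exists_finitary_perm {S : Finset ℤ} {ψ : ℤ → ℤ} (hψ : Set.InjOn ψ S) :
    ∃ σ : Perm ℤ, {x : ℤ | σ x ≠ x}.Finite ∧ ∀ x ∈ S, σ x = ψ x := by
  classical
  set T := S ∪ S.image ψ
  obtain ⟨e, he⟩ := Set.MapsTo.exists_equiv_extend_of_card_eq (Fintype.card_coe T)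
    (s := {x : T | (x : ℤ) ∈ S}) (f := fun x => ψ x)
    (fun (x : T) (hx : (x : ℤ) ∈ S) => Finset.mem_union_right _ (Finset.mem_image_of_mem ψ hx))
    (fun x hx y hy hxy => Subtype.ext (hψ hx hy hxy))
  refine ⟨extendPerm T e, finite_setOf_extendPerm_ne T e, fun x hx => ?_⟩
  rw [extendPerm_apply_of_mem T e (Finset.mem_union_left _ hx)]
  exact he _ hx

theorem exists_finitary_perm_fix_eqOn {F K : Finset ℤ} (hFK : Disjoint F K) {f : ℤ → ℤ}
    (hf : Set.InjOn f K) (hfK : ∀ x ∈ K, f x ∉ F) :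
    ∃ σ : Perm ℤ, {x : ℤ | σ x ≠ x}.Finite ∧ (∀ x ∈ F, σ x = x) ∧ ∀ x ∈ K, σ x = f x := by
  classical
  have hψ : Set.InjOn (K.piecewise f id) ↑(F ∪ K) := by
    intro x hx y hy hxy
    simp only [coe_union, Set.mem_union, mem_coe] at hx hy
    by_cases hxK : x ∈ K <;> by_cases hyK : y ∈ K <;>
      grind [piecewise_eq_of_mem, piecewise_eq_of_notMem, Set.InjOn]
  obtain ⟨σ, hσ, hσψ⟩ := hψ.exists_finitary_perm
  refine ⟨σ, hσ, fun x hx => ?_, fun x hx => ?_⟩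
  · rw [hσψ x (mem_union_left _ hx), piecewise_eq_of_notMem _ _ _ (disjoint_left.mp hFK hx)]
    rfl
  · rw [hσψ x (mem_union_right _ hx), piecewise_eq_of_mem _ _ _ hx]

lemma card_filter_exists_extendPerm_mem_mul_card_le (I F : Finset ℤ) {m : ℕ} (k : Fin m → ℤ)
    (hk : ∀ i, k i ∈ I) :
    #{g : Perm {x : ℤ // x ∈ I} | ∃ i, extendPerm I g (k i) ∈ F} * #I ≤ m * #F * (#I)! := by
  have union_bound :
      ({g | ∃ i, extendPerm I g (k i) ∈ F} : Finset (Perm {x : ℤ // x ∈ I})) ⊆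
      univ.biUnion fun i => {g : Perm {x : ℤ // x ∈ I} | g ⟨k i, hk i⟩ ∈ F.subtype (· ∈ I)} := by
    intro g
    simp [extendPerm_apply_of_mem I g (hk _)]
  calc #{g : Perm {x : ℤ // x ∈ I} | ∃ i, extendPerm I g (k i) ∈ F} * #I
      ≤ (∑ i, #{g : Perm {x : ℤ // x ∈ I} | g ⟨k i, hk i⟩ ∈ F.subtype (· ∈ I)}) * #I := by
        gcongr
        exact (card_le_card union_bound).trans card_biUnion_le
    _ = ∑ _i : Fin m, #(F.subtype (· ∈ I)) * (#I)! := by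
        rw [sum_mul]
        refine sum_congr rfl fun i _ => ?_
        simpa only [Fintype.card_coe] using
          card_filter_perm_apply_mem_mul_card (⟨k i, hk i⟩ : {x : ℤ // x ∈ I}) (F.subtype (· ∈ I))
    _ ≤ ∑ _i : Fin m, #F * (#I)! := by
        gcongr
        exact (card_subtype _ _).trans_le (card_filter_le _ _)
    _ = m * #F * (#I)! := by simp [mul_assoc]

noncomputable def permAverage (I : Finset ℤ) (f : Perm ℤ → ℂ) : ℂ :=
  (Fintype.card (Perm {x : ℤ // x ∈ I}) : ℂ)⁻¹ * ∑ g : Perm {x : ℤ // x ∈ I}, f (extendPerm I g)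

theorem tendsto_permAverage {m : ℕ} (k : Fin m → ℤ) (F : Finset ℤ) {f : Perm ℤ → ℂ} {L : ℂ}
    {C : ℝ} (hC : ∀ σ, ‖f σ‖ ≤ C)
    (hL : ∀ σ : Perm ℤ, {x : ℤ | σ x ≠ x}.Finite → (∀ i, σ (k i) ∉ F) → f σ = L) :
    Tendsto (fun I => permAverage I f) atTop (𝓝 L) := by
  classical
  have hC' : 0 ≤ C + ‖L‖ := add_nonneg ((norm_nonneg _).trans (hC 1)) (norm_nonneg _)
  have bound : ∀ᶠ I in atTop, ‖permAverage I f - L‖ ≤ m * #F * (C + ‖L‖) / #I := by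
    filter_upwards [eventually_ge_atTop (univ.image k),
      tendsto_card_atTop_atTop.eventually_gt_atTop 0] with I hkI hI
    have hk : ∀ i, k i ∈ I := fun i => hkI (mem_image_of_mem k (mem_univ i))
    set bad : Finset (Perm {x : ℤ // x ∈ I}) := {g | ∃ i, extendPerm I g (k i) ∈ F}
    calc ‖permAverage I f - L‖ ≤ #bad * (C + ‖L‖) / (#I)! := by
          rw [← Fintype.card_coe I, ← Fintype.card_perm]
          refine norm_average_sub_le _ _ _ (fun g => ?_) fun g hg => ?_
          · exact (norm_sub_le _ _).trans (by gcongr; exact hC _)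
          · exact hL _ (finite_setOf_extendPerm_ne I g) (by simpa [bad] using hg)
      _ ≤ m * #F * (C + ‖L‖) / #I := by
          rw [div_le_div_iff₀ (by positivity) (by positivity)]
          have := card_filter_exists_extendPerm_mem_mul_card_le I F k hk
          calc (#bad : ℝ) * (C + ‖L‖) * #I = ((#bad * #I : ℕ) : ℝ) * (C + ‖L‖) := by
                push_cast; ring
            _ ≤ ((m * #F * (#I)! : ℕ) : ℝ) * (C + ‖L‖) := by gcongr
            _ = m * #F * (C + ‖L‖) * (#I)! := by push_cast; ring
  refine tendsto_sub_nhds_zero_iff.mp (squeeze_zero_norm' bound ?_)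
  exact tendsto_comp_card_atTop_iff.mpr (tendsto_const_div_atTop_nhds_zero_nat _)

end FinitaryPerm

section Monomial

omit [CStarRing A] [StarModule ℂ A] [CompleteSpace A]

variable (ι : ℤ → A →⋆ₐ[ℂ] (H →L[ℂ] H))

noncomputable def monomial {n : ℕ} (j : Fin n → ℤ) (a : Fin n → A) : H →L[ℂ] H :=
  (List.ofFn fun i => ι (j i) (a i)).prod

@[simp]
lemma monomial_zero (j : Fin 0 → ℤ) (a : Fin 0 → A) : monomial ι j a = 1 := by
  simp [monomial]

lemma monomial_one (j : Fin 1 → ℤ) (a : Fin 1 → A) : monomial ι j a = ι (j 0) (a 0) := by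
  simp [monomial]

lemma monomial_append {n₁ n₂ : ℕ} (j₁ : Fin n₁ → ℤ) (j₂ : Fin n₂ → ℤ) (a₁ : Fin n₁ → A)
    (a₂ : Fin n₂ → A) :
    monomial ι (Fin.append j₁ j₂) (Fin.append a₁ a₂) = monomial ι j₁ a₁ * monomial ι j₂ a₂ := by
  simp [monomial, List.ofFn_add, List.prod_append]

lemma monomial_mem_localAlgebra {I : Finset ℤ} {n : ℕ} {j : Fin n → ℤ} (hj : ∀ i, j i ∈ I)
    (a : Fin n → A) : monomial ι j a ∈ localAlgebra ι I :=
  list_prod_mem fun _ hx => by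
    obtain ⟨i, rfl⟩ := List.mem_ofFn.mp hx
    exact StarAlgebra.subset_adjoin ℂ _ (Set.mem_biUnion (hj i) ⟨a i, rfl⟩)

lemma exists_monomial_of_mem_closure {I : Finset ℤ} {W : H →L[ℂ] H}
    (hW : W ∈ Submonoid.closure ((⋃ j ∈ I, Set.range fun a : A => ι j a) ∪
      star (⋃ j ∈ I, Set.range fun a : A => ι j a))) :
    ∃ (n : ℕ) (j : Fin n → ℤ) (a : Fin n → A), (∀ i, j i ∈ I) ∧ monomial ι j a = W := by
  induction hW using Submonoid.closure_induction with
  | mem W hW =>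
    have : ∃ j ∈ I, ∃ a, ι j a = W := by
      rcases hW with hW | hW
      · simpa using hW
      · obtain ⟨j, hj, a, ha⟩ : ∃ j ∈ I, ∃ a, ι j a = star W := by simpa using hW
        exact ⟨j, hj, star a, by rw [map_star, ha, star_star]⟩
    obtain ⟨j, hj, a, rfl⟩ := this
    exact ⟨1, ![j], ![a], by simpa using hj, monomial_one ι _ _⟩
  | one => exact ⟨0, Fin.elim0, Fin.elim0, nofun, monomial_zero ι _ _⟩
  | mul _ _ _ _ h₁ h₂ =>
    obtain ⟨n₁, j₁, a₁, hj₁, rfl⟩ := h₁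
    obtain ⟨n₂, j₂, a₂, hj₂, rfl⟩ := h₂
    refine ⟨n₁ + n₂, Fin.append j₁ j₂, Fin.append a₁ a₂, fun i => ?_, monomial_append ι ..⟩
    induction i using Fin.addCases <;> simp [hj₁, hj₂]

theorem LinearMap.eqOn_localAlgebra {M : Type*} [AddCommMonoid M] [Module ℂ M]
    {f g : (H →L[ℂ] H) →ₗ[ℂ] M} {I : Finset ℤ}
    (h : ∀ (n : ℕ) (j : Fin n → ℤ) (a : Fin n → A), (∀ i, j i ∈ I) →
      f (monomial ι j a) = g (monomial ι j a)) :
    Set.EqOn f g (localAlgebra ι I) := fun X hX => by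
  have hX : X ∈ Subalgebra.toSubmodule (localAlgebra ι I).toSubalgebra := hX
  rw [localAlgebra, StarAlgebra.adjoin_eq_span] at hX
  refine LinearMap.eqOn_span (fun W hW => ?_) hX
  obtain ⟨n, j, a, hj, rfl⟩ := exists_monomial_of_mem_closure ι hW
  exact h n j a hj

end Monomial

section Norm

variable (ι : ℤ → A →⋆ₐ[ℂ] (H →L[ℂ] H))

lemma norm_monomial_le {n : ℕ} (hn : 1 ≤ n) (j : Fin n → ℤ) (a : Fin n → A) :
    ‖monomial ι j a‖ ≤ ∏ i, ‖a i‖ := by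
  let _ : CStarAlgebra A := { }
  calc ‖monomial ι j a‖ ≤ ((List.ofFn fun i => ι (j i) (a i)).map norm).prod :=
        List.norm_prod_le' (by simp; omega)
    _ = ∏ i, ‖ι (j i) (a i)‖ := by simp [List.map_ofFn, List.prod_ofFn]
    _ ≤ ∏ i, ‖a i‖ := by
        gcongr with i; exact NonUnitalStarAlgHom.norm_apply_le (ι (j i)) (a i)

lemma norm_inner_sandwich_monomial_le (Ω : H) (X Z : H →L[ℂ] H) {m : ℕ} (hm : 1 ≤ m)
    (k : Fin m → ℤ) (B : Fin m → A) :
    ‖⟪Ω, (X * monomial ι k B * Z) Ω⟫_ℂ‖ ≤ ‖X‖ * (∏ i, ‖B i‖) * ‖Z‖ * ‖Ω‖ ^ 2 := by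
  refine (norm_inner_apply_self_le _ Ω).trans ?_
  gcongr
  exact norm_mul₃_le.trans (by gcongr; exact norm_monomial_le ι hm k B)

end Norm

section Exchange

omit [CStarRing A] [StarModule ℂ A] [CompleteSpace A]

variable (ι : ℤ → A →⋆ₐ[ℂ] (H →L[ℂ] H)) (Ω : H)

def IsExchangeable : Prop :=
  ∀ g : Perm ℤ, {x : ℤ | g x ≠ x}.Finite → ∀ n : ℕ, 1 ≤ n → ∀ (j : Fin n → ℤ) (a : Fin n → A),
    ⟪Ω, monomial ι (g ∘ j) a Ω⟫_ℂ = ⟪Ω, monomial ι j a Ω⟫_ℂ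

noncomputable def vectorState : (H →L[ℂ] H) →ₗ[ℂ] ℂ where
  toFun T := ⟪Ω, T Ω⟫_ℂ
  map_add' _ _ := inner_add_right ..
  map_smul' _ _ := inner_smul_right ..

variable {ι Ω}

theorem IsExchangeable.inner_sandwich_comp_eq (hexch : IsExchangeable ι Ω)
    {I₁ I₃ : Finset ℤ} {X Z : H →L[ℂ] H} (hX : X ∈ localAlgebra ι I₁)
    (hZ : Z ∈ localAlgebra ι I₃) {σ : Perm ℤ} (hσ : {x : ℤ | σ x ≠ x}.Finite)
    (hσ_fix : ∀ x ∈ I₁ ∪ I₃, σ x = x) {m : ℕ} (hm : 1 ≤ m) (k : Fin m → ℤ) (B : Fin m → A) :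
    ⟪Ω, (X * monomial ι (σ ∘ k) B * Z) Ω⟫_ℂ = ⟪Ω, (X * monomial ι k B * Z) Ω⟫_ℂ := by
  have on_monomials : ∀ {n₁ n₃ : ℕ} (j₁ : Fin n₁ → ℤ) (a₁ : Fin n₁ → A) (j₃ : Fin n₃ → ℤ)
      (a₃ : Fin n₃ → A), (∀ i, j₁ i ∈ I₁) → (∀ i, j₃ i ∈ I₃) →
      ⟪Ω, (monomial ι j₁ a₁ * monomial ι (σ ∘ k) B * monomial ι j₃ a₃) Ω⟫_ℂ =
        ⟪Ω, (monomial ι j₁ a₁ * monomial ι k B * monomial ι j₃ a₃) Ω⟫_ℂ := by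
    intro n₁ n₃ j₁ a₁ j₃ a₃ hj₁ hj₃
    have hσj₁ : σ ∘ j₁ = j₁ := funext fun i => hσ_fix _ (mem_union_left _ (hj₁ i))
    have hσj₃ : σ ∘ j₃ = j₃ := funext fun i => hσ_fix _ (mem_union_right _ (hj₃ i))
    have := hexch σ hσ _ (by omega) (Fin.append (Fin.append j₁ k) j₃)
      (Fin.append (Fin.append a₁ B) a₃)
    simpa only [Fin.comp_append, hσj₁, hσj₃, monomial_append] using this
  have on_monomials_left : ∀ {n₁ : ℕ} (j₁ : Fin n₁ → ℤ) (a₁ : Fin n₁ → A), (∀ i, j₁ i ∈ I₁) →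
      ⟪Ω, (monomial ι j₁ a₁ * monomial ι (σ ∘ k) B * Z) Ω⟫_ℂ =
        ⟪Ω, (monomial ι j₁ a₁ * monomial ι k B * Z) Ω⟫_ℂ := fun j₁ a₁ hj₁ =>
    LinearMap.eqOn_localAlgebra ι
      (f := vectorState Ω ∘ₗ LinearMap.mulLeft ℂ (monomial ι j₁ a₁ * monomial ι (σ ∘ k) B))
      (g := vectorState Ω ∘ₗ LinearMap.mulLeft ℂ (monomial ι j₁ a₁ * monomial ι k B))
      (fun _ j₃ a₃ hj₃ => on_monomials j₁ a₁ j₃ a₃ hj₁ hj₃) hZ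
  exact LinearMap.eqOn_localAlgebra ι
    (f := vectorState Ω ∘ₗ LinearMap.mulRight ℂ Z ∘ₗ LinearMap.mulRight ℂ (monomial ι (σ ∘ k) B))
    (g := vectorState Ω ∘ₗ LinearMap.mulRight ℂ Z ∘ₗ LinearMap.mulRight ℂ (monomial ι k B))
    (fun _ j₁ a₁ hj₁ => on_monomials_left j₁ a₁ hj₁) hX

end Exchange

section Equilibrium

variable (ι : ℤ → A →⋆ₐ[ℂ] (H →L[ℂ] H)) (Ω : H)

def BlockSingleton : Prop :=
  ∀ I₁ I₂ I₃ : Finset ℤ, Disjoint (I₁ ∪ I₃) I₂ →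
    ∀ X ∈ localAlgebra ι I₁, ∀ Y ∈ localAlgebra ι I₂, ∀ Z ∈ localAlgebra ι I₃,
      ⟪Ω, (X * Y * Z) Ω⟫_ℂ = ⟪Ω, (X * Z) Ω⟫_ℂ * ⟪Ω, Y Ω⟫_ℂ

def ConvergesToEquilibrium : Prop :=
  ∀ I₁ I₃ : Finset ℤ, ∀ X ∈ localAlgebra ι I₁, ∀ Z ∈ localAlgebra ι I₃,
    ∀ m : ℕ, 1 ≤ m → ∀ (k : Fin m → ℤ) (B : Fin m → A),
      Tendsto (fun I => permAverage I fun σ => ⟪Ω, (X * monomial ι (σ ∘ k) B * Z) Ω⟫_ℂ) atTop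
        (𝓝 (⟪Ω, (X * Z) Ω⟫_ℂ * ⟪Ω, monomial ι k B Ω⟫_ℂ))

variable {ι Ω}

theorem BlockSingleton.convergesToEquilibrium (hexch : IsExchangeable ι Ω)
    (hbs : BlockSingleton ι Ω) : ConvergesToEquilibrium ι Ω := by
  intro I₁ I₃ X hX Z hZ m hm k B
  refine tendsto_permAverage k (I₁ ∪ I₃)
    (fun σ => norm_inner_sandwich_monomial_le ι Ω X Z hm (σ ∘ k) B) fun σ hσ hσk => ?_
  have hdisj : Disjoint (I₁ ∪ I₃) (univ.image (σ ∘ k)) := by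
    simpa [disjoint_right] using hσk
  rw [hbs I₁ _ I₃ hdisj X hX _ (monomial_mem_localAlgebra ι (by simp) B) Z hZ,
    hexch σ hσ m hm k B]

theorem ConvergesToEquilibrium.inner_sandwich_monomial (hexch : IsExchangeable ι Ω)
    (hconv : ConvergesToEquilibrium ι Ω) {I₁ I₃ : Finset ℤ} {X Z : H →L[ℂ] H}
    (hX : X ∈ localAlgebra ι I₁) (hZ : Z ∈ localAlgebra ι I₃) {n : ℕ} (hn : 1 ≤ n)
    (j : Fin n → ℤ) (a : Fin n → A) (hj : ∀ i, j i ∉ I₁ ∪ I₃) :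
    ⟪Ω, (X * monomial ι j a * Z) Ω⟫_ℂ = ⟪Ω, (X * Z) Ω⟫_ℂ * ⟪Ω, monomial ι j a Ω⟫_ℂ := by
  refine tendsto_nhds_unique ?_ (hconv I₁ I₃ X hX Z hZ n hn j a)
  refine tendsto_permAverage j (I₁ ∪ I₃)
    (fun σ => norm_inner_sandwich_monomial_le ι Ω X Z hn (σ ∘ j) a) fun σ _ hσj => ?_
  obtain ⟨τ, hτ, hτ_fix, hτσ⟩ := exists_finitary_perm_fix_eqOn (F := I₁ ∪ I₃) (K := univ.image j)
    (by simpa [disjoint_right] using hj) σ.injective.injOn (by simpa using hσj)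
  have : τ ∘ j = σ ∘ j := funext fun i => hτσ _ (mem_image_of_mem j (mem_univ i))
  rw [← this]
  exact hexch.inner_sandwich_comp_eq hX hZ hτ hτ_fix hn j a

theorem ConvergesToEquilibrium.blockSingleton (hexch : IsExchangeable ι Ω)
    (hconv : ConvergesToEquilibrium ι Ω) : BlockSingleton ι Ω := by
  intro I₁ I₂ I₃ hdisj X hX Y hY Z hZ
  refine LinearMap.eqOn_localAlgebra ι (f := vectorState Ω ∘ₗ LinearMap.mulLeftRight ℂ (X, Z))
    (g := ⟪Ω, (X * Z) Ω⟫_ℂ • vectorState Ω) (fun n j a hj => ?_) hY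
  show ⟪Ω, (X * monomial ι j a * Z) Ω⟫_ℂ = ⟪Ω, (X * Z) Ω⟫_ℂ * ⟪Ω, monomial ι j a Ω⟫_ℂ
  rcases n.eq_zero_or_pos with rfl | hn
  · -- `hconv` only sees nonempty monomials: write `1 = ι_{j₀}(1)` with `j₀` off `I₁ ∪ I₃`
    obtain ⟨j₀, hj₀⟩ := Infinite.exists_notMem_finset (I₁ ∪ I₃)
    have : monomial ι j a = monomial ι ![j₀] ![1] := by simp [monomial_one]
    rw [this]
    exact hconv.inner_sandwich_monomial hexch hX hZ le_rfl _ _ (by simpa using hj₀)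
  · exact hconv.inner_sandwich_monomial hexch hX hZ hn j a
      fun i => disjoint_right.mp hdisj (hj i)

end Equilibrium

theorem blockSingleton_iff_convergenceToEquilibrium_general
    (ι : ℤ → A →⋆ₐ[ℂ] (H →L[ℂ] H)) (Ω : H)
    (hexch : ∀ g : Equiv.Perm ℤ, {x : ℤ | g x ≠ x}.Finite →
      ∀ n : ℕ, 1 ≤ n → ∀ (j : Fin n → ℤ) (a : Fin n → A),
        (inner ℂ Ω (((List.ofFn fun i => ι (g (j i)) (a i)).prod) Ω) : ℂ)
          = inner ℂ Ω (((List.ofFn fun i => ι (j i) (a i)).prod) Ω)) :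
    (∀ I₁ I₂ I₃ : Finset ℤ, Disjoint (I₁ ∪ I₃) I₂ →
        ∀ X ∈ localAlgebra ι I₁, ∀ Y ∈ localAlgebra ι I₂, ∀ Z ∈ localAlgebra ι I₃,
          (inner ℂ Ω ((X * Y * Z) Ω) : ℂ) = inner ℂ Ω ((X * Z) Ω) * inner ℂ Ω (Y Ω))
      ↔
    (∀ I₁ I₃ : Finset ℤ, ∀ X ∈ localAlgebra ι I₁, ∀ Z ∈ localAlgebra ι I₃,
        ∀ m : ℕ, 1 ≤ m → ∀ (k : Fin m → ℤ) (B : Fin m → A),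
          Tendsto
            (fun I : Finset ℤ =>
              (Fintype.card (Equiv.Perm {x : ℤ // x ∈ I}) : ℂ)⁻¹ *
                ∑ g : Equiv.Perm {x : ℤ // x ∈ I},
                  (inner ℂ Ω ((X *
                    (List.ofFn fun i => ι (extendPerm I g (k i)) (B i)).prod * Z) Ω) : ℂ))
            atTop
            (nhds ((inner ℂ Ω ((X * Z) Ω) : ℂ) *
              inner ℂ Ω (((List.ofFn fun i => ι (k i) (B i)).prod) Ω)))) :=
  ⟨BlockSingleton.convergesToEquilibrium hexch, ConvergesToEquilibrium.blockSingleton hexch⟩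

/-- for an exchangeable process, the block singleton condition is
equivalent to the property of convergence to equilibrium along the net of
finite subsets of `ℤ`. -/
theorem blockSingleton_iff_convergenceToEquilibrium
    (ι : ℤ → A →⋆ₐ[ℂ] (H →L[ℂ] H)) (Ω : H) (hΩ : ‖Ω‖ = 1)
    (hexch : ∀ g : Equiv.Perm ℤ, {x : ℤ | g x ≠ x}.Finite →
      ∀ n : ℕ, 1 ≤ n → ∀ (j : Fin n → ℤ) (a : Fin n → A),
        (inner ℂ Ω (((List.ofFn fun i => ι (g (j i)) (a i)).prod) Ω) : ℂ)
          = inner ℂ Ω (((List.ofFn fun i => ι (j i) (a i)).prod) Ω)) :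
    (∀ I₁ I₂ I₃ : Finset ℤ, Disjoint (I₁ ∪ I₃) I₂ →
        ∀ X ∈ localAlgebra ι I₁, ∀ Y ∈ localAlgebra ι I₂, ∀ Z ∈ localAlgebra ι I₃,
          (inner ℂ Ω ((X * Y * Z) Ω) : ℂ) = inner ℂ Ω ((X * Z) Ω) * inner ℂ Ω (Y Ω))
      ↔
    (∀ I₁ I₃ : Finset ℤ, ∀ X ∈ localAlgebra ι I₁, ∀ Z ∈ localAlgebra ι I₃,
        ∀ m : ℕ, 1 ≤ m → ∀ (k : Fin m → ℤ) (B : Fin m → A),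
          Tendsto
            (fun I : Finset ℤ =>
              (Fintype.card (Equiv.Perm {x : ℤ // x ∈ I}) : ℂ)⁻¹ *
                ∑ g : Equiv.Perm {x : ℤ // x ∈ I},
                  (inner ℂ Ω ((X *
                    (List.ofFn fun i => ι (extendPerm I g (k i)) (B i)).prod * Z) Ω) : ℂ))
            atTop
            (nhds ((inner ℂ Ω ((X * Z) Ω) : ℂ) *
              inner ℂ Ω (((List.ofFn fun i => ι (k i) (B i)).prod) Ω)))) :=
  blockSingleton_iff_convergenceToEquilibrium_general ι Ω hexch
end

section
/- For an element x of the Boolean algebra ℬ the following are equivalent: (i) U_g x U_g* = x for every permutation g of ℤ moving only finitely many elements; (ii) U x U* = x where U is the shift unitary; (iii) there exist α, β ∈ ℂ with x = α·P_# + β·(1 − P_#). In other words, the fixed point algebra of ℬ under the permutation action coincides with the one under the shift action and equals ℂP_# ⊕ ℂP_#^⊥. -/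
noncomputable section

/-- The Hilbert space `ℓ²({#} ∪ ℤ)`, with `#` encoded as `none : Option ℤ`. -/
abbrev BooleanSpace : Type := lp (fun _ : Option ℤ => ℂ) 2

/-- The canonical orthonormal basis vectors `e_x`, `x ∈ {#} ∪ ℤ`;
`e none` is the vacuum vector `e_#`. -/
def e (x : Option ℤ) : BooleanSpace := lp.single 2 x (1 : ℂ)

/-- The Boolean algebra `ℬ = {k + c·1 : k compact, c ∈ ℂ}`, as a subset of `B(H)`. -/
def BooleanAlgebraSet : Set (BooleanSpace →L[ℂ] BooleanSpace) :=
  {T | ∃ k : BooleanSpace →L[ℂ] BooleanSpace, IsCompactOperator ⇑k ∧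
    ∃ c : ℂ, T = k + c • 1}

/-- The orthogonal projection `P_#` of `ℓ²({#} ∪ ℤ)` onto `ℂ e_#`. -/
def vacuumProjection : BooleanSpace →L[ℂ] BooleanSpace :=
  (innerSL ℂ (e none)).smulRight (e none)

/-- `V` is the unitary of `ℓ²({#} ∪ ℤ)` implementing the permutation `g` of `ℤ`
(fixing the vacuum). -/
def ImplementsPerm (g : Equiv.Perm ℤ) (V : BooleanSpace →L[ℂ] BooleanSpace) : Prop :=
  V * ContinuousLinearMap.adjoint V = 1 ∧ ContinuousLinearMap.adjoint V * V = 1 ∧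
    (∀ i : ℤ, V (e (some i)) = e (some (g i))) ∧ V (e none) = e none

/-- `V` is the shift unitary of `ℓ²({#} ∪ ℤ)`: `V e_i = e_{i+1}` and `V e_# = e_#`. -/
def IsShiftUnitary (V : BooleanSpace →L[ℂ] BooleanSpace) : Prop :=
  V * ContinuousLinearMap.adjoint V = 1 ∧ ContinuousLinearMap.adjoint V * V = 1 ∧
    (∀ i : ℤ, V (e (some i)) = e (some (i + 1))) ∧ V (e none) = e none

/-!
Write `x = k + c • 1` with `k` compact. A unitary fixing `e_#` commutes with `P_#`, so every
`α P_# + β (1 - P_#)` is invariant. Conversely, invariance of `x` makes `k` commute with the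
implementing unitaries. For `a ∈ ℤ` these unitaries (transpositions `(a, a + n + 1)`, resp.
powers of the shift) carry `e_a` along an orthonormal sequence while fixing `e_#`. Hence
`‖k e_a‖` is constant along an orthonormal sequence, on which a compact operator tends to `0`
along a subsequence, so `k e_a = 0`; and `⟪e_a, k e_#⟫` is constant along the orbit, whereas
Bessel's inequality forces these coefficients to `0`. Thus `k = λ P_#`.
-/

open Filter Topology
open scoped InnerProductSpace

section Hilbert

variable {𝕜 E F ι : Type*} [RCLike 𝕜]
  [NormedAddCommGroup E] [InnerProductSpace 𝕜 E]
  [NormedAddCommGroup F] [InnerProductSpace 𝕜 F]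

theorem Orthonormal.tendsto_inner_cofinite {v : ι → E} (hv : Orthonormal 𝕜 v) (x : E) :
    Tendsto (fun i => ⟪v i, x⟫_𝕜) cofinite (𝓝 0) := by
  have hsq := (hv.inner_products_summable x).tendsto_cofinite_zero
  rw [tendsto_zero_iff_norm_tendsto_zero]
  simpa using hsq.sqrt

theorem Orthonormal.eq_zero_of_forall_inner_eq {v : ι → E} (hv : Orthonormal 𝕜 v) {x : E}
    {u : ℕ → ι} (hu : Function.Injective u) {c : 𝕜} (h : ∀ n, ⟪v (u n), x⟫_𝕜 = c) :
    c = 0 :=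
  tendsto_nhds_unique tendsto_const_nhds <|
    ((hv.tendsto_inner_cofinite x).comp (Nat.cofinite_eq_atTop ▸ hu.tendsto_cofinite)).congr h

theorem Unitary.conj_eq_iff_commute {R : Type*} [Monoid R] [StarMul R] {U : R}
    (hU : U ∈ unitary R) {x : R} : U * x * star U = x ↔ Commute U x := by
  constructor
  · intro h
    calc U * x = U * x * star U * U := by
          rw [mul_assoc _ (star U), Unitary.star_mul_self_of_mem hU, mul_one]
      _ = x * U := by rw [h]
  · intro h
    rw [h.eq, mul_assoc, Unitary.mul_star_self_of_mem hU, mul_one]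

theorem finite_setOf_swap_apply_ne {α : Type*} [DecidableEq α] (a b : α) :
    {x | Equiv.swap a b x ≠ x}.Finite :=
  (Set.toFinite {a, b}).subset fun x hx => by simp [(Equiv.swap_apply_ne_self_iff.1 hx).2]

variable [CompleteSpace E] [CompleteSpace F]

-- A limit point `w` of `T (v (u n))` is also a weak limit of it, and orthonormal sequences tend
-- weakly to `0`; hence `⟪w, w⟫ = 0`.
theorem IsCompactOperator.exists_subseq_tendsto_zero {T : E →L[𝕜] F} (hT : IsCompactOperator T)
    {v : ι → E} (hv : Orthonormal 𝕜 v) {u : ℕ → ι} (hu : Function.Injective u) :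
    ∃ φ : ℕ → ℕ, StrictMono φ ∧ Tendsto (fun n => T (v (u (φ n)))) atTop (𝓝 0) := by
  obtain ⟨K, hK, hsub⟩ := hT.image_closedBall_subset_compact 1
  have hmem (n : ℕ) : T (v (u n)) ∈ K := hsub ⟨v (u n), by simp [hv.1 (u n)], rfl⟩
  obtain ⟨w, -, φ, hφ, hlim⟩ := hK.tendsto_subseq hmem
  have hweak : Tendsto (fun n => ⟪w, T (v (u (φ n)))⟫_𝕜) atTop (𝓝 0) := by
    have := (hv.tendsto_inner_cofinite (T.adjoint w)).comp
      (Nat.cofinite_eq_atTop ▸ (hu.comp hφ.injective).tendsto_cofinite)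
    simpa [ContinuousLinearMap.adjoint_inner_left] using this.star
  have hw : w = 0 := inner_self_eq_zero.1 <|
    tendsto_nhds_unique (tendsto_const_nhds.inner hlim) hweak
  exact ⟨φ, hφ, hw ▸ hlim⟩

theorem IsCompactOperator.apply_eq_zero_of_norm_eq {T : E →L[𝕜] F} (hT : IsCompactOperator T)
    {v : ι → E} (hv : Orthonormal 𝕜 v) {u : ℕ → ι} (hu : Function.Injective u) {x : E}
    (h : ∀ n, ‖T (v (u n))‖ = ‖T x‖) : T x = 0 := by
  obtain ⟨φ, -, hφ⟩ := hT.exists_subseq_tendsto_zero hv hu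
  have : Tendsto (fun _ : ℕ => ‖T x‖) atTop (𝓝 0) := by simpa [h] using hφ.norm
  exact norm_eq_zero.1 (tendsto_nhds_unique tendsto_const_nhds this)

theorem ContinuousLinearMap.commute_of_conj_add_smul_one_eq {V k : E →L[𝕜] E}
    (hV : V ∈ unitary (E →L[𝕜] E)) {c : 𝕜}
    (h : V * (k + c • 1) * star V = k + c • 1) :
    Commute V k := by
  simpa using ((Unitary.conj_eq_iff_commute hV).1 h).sub_right ((Commute.one_right V).smul_right c)

def HilbertBasis.permIsometry (b : HilbertBasis ι 𝕜 E) (σ : Equiv.Perm ι) :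
    E ≃ₗᵢ[𝕜] E :=
  b.repr.trans (HilbertBasis.mk (b.orthonormal.comp σ σ.injective)
    (by rw [σ.surjective.range_comp, b.dense_span])).repr.symm

theorem HilbertBasis.permIsometry_apply (b : HilbertBasis ι 𝕜 E) (σ : Equiv.Perm ι) (i : ι) :
    b.permIsometry σ (b i) = b (σ i) := by
  classical
  simp [permIsometry, HilbertBasis.repr_self]

variable {v : ι → E} {u : ℕ → ι} {T : E →L[𝕜] E} {V : ℕ → E →L[𝕜] E} {x : E}

theorem IsCompactOperator.apply_eq_zero_of_commute_unitary (hT : IsCompactOperator T)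
    (hv : Orthonormal 𝕜 v) (hu : Function.Injective u)
    (hV : ∀ n, V n ∈ unitary (E →L[𝕜] E)) (hVT : ∀ n, Commute (V n) T)
    (hx : ∀ n, V n x = v (u n)) : T x = 0 :=
  hT.apply_eq_zero_of_norm_eq hv hu fun n => by
    rw [← hx, ← mul_apply_eq_comp, ← (hVT n).eq, mul_apply_eq_comp,
      ContinuousLinearMap.norm_map_of_mem_unitary (hV n)]

theorem Orthonormal.inner_apply_eq_zero_of_commute_unitary (hv : Orthonormal 𝕜 v)
    (hu : Function.Injective u) (hV : ∀ n, V n ∈ unitary (E →L[𝕜] E))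
    (hVT : ∀ n, Commute (V n) T) (hx : ∀ n, V n x = v (u n)) {y : E} (hy : ∀ n, V n y = y) :
    ⟪x, T y⟫_𝕜 = 0 :=
  hv.eq_zero_of_forall_inner_eq hu fun n =>
    calc ⟪v (u n), T y⟫_𝕜 = ⟪V n x, T (V n y)⟫_𝕜 := by rw [hx, hy]
      _ = ⟪V n x, V n (T y)⟫_𝕜 := by
        rw [← mul_apply_eq_comp, ← (hVT n).eq, mul_apply_eq_comp]
      _ = ⟪x, T y⟫_𝕜 := ContinuousLinearMap.inner_map_map_of_mem_unitary (hV n) _ _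

end Hilbert

def standardBasis : HilbertBasis (Option ℤ) ℂ BooleanSpace := default

theorem coe_standardBasis : ⇑standardBasis = e := by
  funext x
  rw [e, ← HilbertBasis.repr_symm_single]
  rfl

theorem orthonormal_e : Orthonormal ℂ e := coe_standardBasis ▸ standardBasis.orthonormal

theorem dense_span_range_e : Dense (Submodule.span ℂ (Set.range e) : Set BooleanSpace) := by
  rw [← coe_standardBasis, Submodule.dense_iff_topologicalClosure_eq_top]
  exact standardBasis.dense_span

def permUnitary (σ : Equiv.Perm (Option ℤ)) : BooleanSpace →L[ℂ] BooleanSpace :=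
  standardBasis.permIsometry σ

theorem permUnitary_mem_unitary (σ : Equiv.Perm (Option ℤ)) :
    permUnitary σ ∈ unitary (BooleanSpace →L[ℂ] BooleanSpace) :=
  (Unitary.linearIsometryEquiv.symm (standardBasis.permIsometry σ)).2

theorem permUnitary_e (σ : Equiv.Perm (Option ℤ)) (x : Option ℤ) :
    permUnitary σ (e x) = e (σ x) := by
  have := standardBasis.permIsometry_apply σ x
  rwa [coe_standardBasis] at this

theorem implementsPerm_permUnitary (g : Equiv.Perm ℤ) :
    ImplementsPerm g (permUnitary (Equiv.optionCongr g)) :=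
  ⟨Unitary.mul_star_self_of_mem (permUnitary_mem_unitary _),
    Unitary.star_mul_self_of_mem (permUnitary_mem_unitary _),
    fun i => permUnitary_e _ (some i), permUnitary_e _ none⟩

theorem isShiftUnitary_permUnitary :
    IsShiftUnitary (permUnitary (Equiv.optionCongr (Equiv.addRight 1))) :=
  ⟨Unitary.mul_star_self_of_mem (permUnitary_mem_unitary _),
    Unitary.star_mul_self_of_mem (permUnitary_mem_unitary _),
    fun i => permUnitary_e _ (some i), permUnitary_e _ none⟩

theorem permUnitary_shift_pow_e (n : ℕ) (x : Option ℤ) :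
    (permUnitary (Equiv.optionCongr (Equiv.addRight 1)) ^ n) (e x) = e (x.map (· + n)) := by
  induction n with
  | zero => cases x <;> simp
  | succ n ih =>
    rw [pow_succ', mul_apply_eq_comp, ih, permUnitary_e]
    cases x <;> simp [add_assoc]

theorem vacuumProjection_apply (f : BooleanSpace) :
    vacuumProjection f = ⟪e none, f⟫_ℂ • e none :=
  rfl

theorem commute_vacuumProjection {V : BooleanSpace →L[ℂ] BooleanSpace}
    (hV : V ∈ unitary (BooleanSpace →L[ℂ] BooleanSpace)) (hVe : V (e none) = e none) :
    Commute V vacuumProjection := by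
  have hVe' : ContinuousLinearMap.adjoint V (e none) = e none := by
    rw [← hVe, ← mul_apply_eq_comp, ← ContinuousLinearMap.star_eq_adjoint,
      Unitary.star_mul_self_of_mem hV, one_apply_eq_self, hVe]
  ext f
  simp only [mul_apply_eq_comp, vacuumProjection_apply, map_smul, hVe,
    ← ContinuousLinearMap.adjoint_inner_left, hVe']

theorem conj_eq_of_map_vacuum {V : BooleanSpace →L[ℂ] BooleanSpace}
    (hV : V ∈ unitary (BooleanSpace →L[ℂ] BooleanSpace)) (hVe : V (e none) = e none)
    (α β : ℂ) :
    V * (α • vacuumProjection + β • (1 - vacuumProjection)) * star V =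
      α • vacuumProjection + β • (1 - vacuumProjection) := by
  have hP := commute_vacuumProjection hV hVe
  exact (Unitary.conj_eq_iff_commute hV).2 <|
    (hP.smul_right α).add_right (((Commute.one_right V).sub_right hP).smul_right β)

theorem eq_smul_vacuumProjection (T : BooleanSpace →L[ℂ] BooleanSpace)
    (hsome : ∀ a : ℤ, T (e (some a)) = 0)
    (hnone : ∀ a : ℤ, ⟪e (some a), T (e none)⟫_ℂ = 0) :
    T = ⟪e none, T (e none)⟫_ℂ • vacuumProjection := by
  refine ContinuousLinearMap.ext_on dense_span_range_e ?_
  rintro _ ⟨_ | a, rfl⟩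
  · have hexp := standardBasis.hasSum_repr (T (e none))
    simp only [HilbertBasis.repr_apply_apply, coe_standardBasis] at hexp
    refine (hexp.unique (hasSum_single none fun i hi => ?_)).trans ?_
    · obtain ⟨a, rfl⟩ := Option.ne_none_iff_exists'.1 hi
      rw [hnone a, zero_smul]
    · simp [vacuumProjection_apply, orthonormal_e.1 none]
  · simp [hsome a, vacuumProjection_apply,
      orthonormal_e.inner_eq_zero (Option.some_ne_none a).symm]

theorem exists_eq_smul_vacuumProjection {T : BooleanSpace →L[ℂ] BooleanSpace}
    (hT : IsCompactOperator T) (V : ℤ → ℕ → BooleanSpace →L[ℂ] BooleanSpace)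
    (u : ℤ → ℕ → ℤ) (hu : ∀ a, Function.Injective (u a))
    (hV : ∀ a n, V a n ∈ unitary (BooleanSpace →L[ℂ] BooleanSpace))
    (hVT : ∀ a n, Commute (V a n) T) (hVe : ∀ a n, V a n (e none) = e none)
    (hVa : ∀ a n, V a n (e (some a)) = e (some (u a n))) :
    ∃ c : ℂ, T = c • vacuumProjection := by
  have hu' (a : ℤ) : Function.Injective (some ∘ u a) := Option.some_injective _ |>.comp (hu a)
  refine ⟨_, eq_smul_vacuumProjection T (fun a => ?_) (fun a => ?_)⟩
  · exact hT.apply_eq_zero_of_commute_unitary orthonormal_e (hu' a) (hV a) (hVT a) (hVa a)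
  · exact orthonormal_e.inner_apply_eq_zero_of_commute_unitary (hu' a) (hV a) (hVT a) (hVa a)
      (hVe a)

theorem exists_eq_smul_vacuumProjection_of_commute_perm {T : BooleanSpace →L[ℂ] BooleanSpace}
    (hT : IsCompactOperator T)
    (hgT : ∀ g : Equiv.Perm ℤ, {i : ℤ | g i ≠ i}.Finite →
      Commute (permUnitary (Equiv.optionCongr g)) T) :
    ∃ c : ℂ, T = c • vacuumProjection :=
  exists_eq_smul_vacuumProjection hT
    (fun a n => permUnitary (Equiv.optionCongr (Equiv.swap a (a + n + 1))))
    (fun a n => a + n + 1) (fun a m n h => by simpa using h)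
    (fun _ _ => permUnitary_mem_unitary _)
    (fun _ _ => hgT _ (finite_setOf_swap_apply_ne _ _))
    (fun _ _ => by simp [permUnitary_e, Equiv.swap_apply_of_ne_of_ne])
    (fun _ _ => by simp [permUnitary_e])

theorem exists_eq_smul_vacuumProjection_of_commute_shift {T : BooleanSpace →L[ℂ] BooleanSpace}
    (hT : IsCompactOperator T)
    (hST : Commute (permUnitary (Equiv.optionCongr (Equiv.addRight 1))) T) :
    ∃ c : ℂ, T = c • vacuumProjection :=
  exists_eq_smul_vacuumProjection hT
    (fun _ n => permUnitary (Equiv.optionCongr (Equiv.addRight 1)) ^ n)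
    (fun a n => a + n) (fun a m n h => by simpa using h)
    (fun _ n => pow_mem (permUnitary_mem_unitary _) n) (fun _ n => hST.pow_left n)
    (fun _ n => permUnitary_shift_pow_e n none)
    (fun a n => permUnitary_shift_pow_e n (some a))

/-- for `x ∈ ℬ` the following are equivalent: (i) `U_g x U_g* = x` for
all finite permutations `g` of `ℤ`; (ii) `U x U* = x` for the shift `U`;
(iii) `x = α P_# + β (1 - P_#)` for some `α, β ∈ ℂ`. In particular the fixed point
algebras of `ℬ` under the permutations and under the shift coincide and are equal to
`ℂ P_# ⊕ ℂ P_#^⊥`. -/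
theorem boolean_fixedPoint_algebra (x : BooleanSpace →L[ℂ] BooleanSpace)
    (hx : x ∈ BooleanAlgebraSet) :
    ((∀ g : Equiv.Perm ℤ, {i : ℤ | g i ≠ i}.Finite →
        ∀ V : BooleanSpace →L[ℂ] BooleanSpace, ImplementsPerm g V →
          V * x * ContinuousLinearMap.adjoint V = x)
      ↔ (∃ α β : ℂ, x = α • vacuumProjection + β • (1 - vacuumProjection)))
    ∧
    ((∀ V : BooleanSpace →L[ℂ] BooleanSpace, IsShiftUnitary V →
        V * x * ContinuousLinearMap.adjoint V = x)
      ↔ (∃ α β : ℂ, x = α • vacuumProjection + β • (1 - vacuumProjection))) := by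
  have invariant_of_form {V} (hV : V * ContinuousLinearMap.adjoint V = 1)
      (hV' : ContinuousLinearMap.adjoint V * V = 1) (hVe : V (e none) = e none) :
      (∃ α β : ℂ, x = α • vacuumProjection + β • (1 - vacuumProjection)) →
        V * x * ContinuousLinearMap.adjoint V = x := by
    rintro ⟨α, β, rfl⟩
    exact conj_eq_of_map_vacuum (Unitary.mem_iff.2 ⟨hV', hV⟩) hVe α β
  obtain ⟨k, hk, c, rfl⟩ := hx
  have of_eq_smul {d : ℂ} (hd : k = d • vacuumProjection) :
      ∃ α β : ℂ, k + c • 1 = α • vacuumProjection + β • (1 - vacuumProjection) :=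
    ⟨d + c, c, by rw [hd]; module⟩
  refine ⟨⟨fun hperm => ?_, fun h g _ V hV => invariant_of_form hV.1 hV.2.1 hV.2.2.2 h⟩,
    ⟨fun hshift => ?_, fun h V hV => invariant_of_form hV.1 hV.2.1 hV.2.2.2 h⟩⟩
  · obtain ⟨d, hd⟩ := exists_eq_smul_vacuumProjection_of_commute_perm hk fun g hg =>
      ContinuousLinearMap.commute_of_conj_add_smul_one_eq (permUnitary_mem_unitary _)
        (hperm g hg _ (implementsPerm_permUnitary g))
    exact of_eq_smul hd
  · obtain ⟨d, hd⟩ := exists_eq_smul_vacuumProjection_of_commute_shift hk <|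
      ContinuousLinearMap.commute_of_conj_add_smul_one_eq (permUnitary_mem_unitary _)
        (hshift _ isShiftUnitary_permUnitary)
    exact of_eq_smul hd
end
end
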